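/- arXiv:2007.01896 — 2 statements merged into one kernel-verified Lean document; each statement's English description precedes it below -/
import Mathlib

section
/- (Regime B equilibria) For b = 4, the set of fixed points of the update map t_4 is exactly {0, 21, 23, 29, 42, 43, 46, 53, 58, 63}; i.e. the equilibria are pure defection, pure cooperation, the two "3-in-a-row" states 21 and 42 (one full row defects, the other full row cooperates), and the six "L-shape" states 23, 29, 43, 46, 53, 58 (exactly two adjacent cells in one row defect). -/
/-- Von Neumann neighbourhoods on the 2×3 toroidal lattice.
Index `i : Fin 6` represents cell `i+1`, so `N(1)={2,3,5}` becomes `nbrs 0 = {1,2,4}`, etc. -/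
def nbrs : Fin 6 → Finset (Fin 6)
  | 0 => {1, 2, 4}
  | 1 => {0, 3, 5}
  | 2 => {0, 3, 4}
  | 3 => {1, 2, 5}
  | 4 => {0, 2, 5}
  | 5 => {1, 3, 4}

lemma nbrs_nonempty (i : Fin 6) : (nbrs i).Nonempty := by
  fin_cases i <;> simp [nbrs]

/-- Pairwise payoff to the first argument; `true` = cooperate, `false` = defect. -/
def pay (b : ℝ) : Bool → Bool → ℝ
  | false, false => 1
  | false, true  => b
  | true,  false => 0
  | true,  true  => 3

/-- Net payoff of cell `i` in state `σ`. -/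
def payoff (b : ℝ) (σ : Fin 6 → Bool) (i : Fin 6) : ℝ :=
  ∑ j ∈ nbrs i, pay b (σ i) (σ j)

/- Synchronous update map `t_b` on states: if the best payoff `m` among the
neighbours of cell `i` satisfies `m ≤ P_b(σ,i)` the cell keeps its strategy;
otherwise it cooperates iff some maximally-paid neighbour cooperates. -/
open scoped Classical in
noncomputable def update (b : ℝ) (σ : Fin 6 → Bool) : Fin 6 → Bool := fun i =>
  let m := (nbrs i).sup' (nbrs_nonempty i) fun j => payoff b σ j
  if m ≤ payoff b σ i then σ i
  else if ∃ j ∈ nbrs i, payoff b σ j = m ∧ σ j = true then true else false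

/-- Decode an integer `0 ≤ n < 64` into a state: cell 1 is the most significant bit,
bit value 1 = cooperate. -/
def dec (n : ℕ) : Fin 6 → Bool := fun i => n.testBit (5 - i.val)

/-- Encode a state as an integer via `n = Σ β(i)·2^(6−i)`. -/
def enc (σ : Fin 6 → Bool) : ℕ := ∑ i : Fin 6, if σ i then 2 ^ (5 - i.val) else 0

/-- The update map `t_b` acting on integer-coded states. -/
noncomputable def T (b : ℝ) (n : ℕ) : ℕ := enc (update b (dec n))

/-! For an integer temptation `b` every payoff is a natural number, and the update rule only
compares payoffs; so `update b` agrees with the same rule evaluated in `ℕ`, which is computable,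
and the fixed points of `T 4` are found by checking all 64 states. -/

def payNat (b : ℕ) : Bool → Bool → ℕ
  | false, false => 1
  | false, true  => b
  | true,  false => 0
  | true,  true  => 3

def payoffNat (b : ℕ) (σ : Fin 6 → Bool) (i : Fin 6) : ℕ :=
  ∑ j ∈ nbrs i, payNat b (σ i) (σ j)

def updateNat (b : ℕ) (σ : Fin 6 → Bool) : Fin 6 → Bool := fun i =>
  let m := (nbrs i).sup' (nbrs_nonempty i) (payoffNat b σ)
  if m ≤ payoffNat b σ i then σ i
  else decide (∃ j ∈ nbrs i, payoffNat b σ j = m ∧ σ j = true)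

lemma pay_natCast (b : ℕ) (x y : Bool) : pay b x y = payNat b x y := by
  cases x <;> cases y <;> simp [pay, payNat]

lemma payoff_natCast (b : ℕ) (σ : Fin 6 → Bool) (i : Fin 6) :
    payoff b σ i = payoffNat b σ i := by
  simp [payoff, payoffNat, pay_natCast]

lemma update_natCast (b : ℕ) (σ : Fin 6 → Bool) : update b σ = updateNat b σ := by
  funext i
  simp only [update, updateNat, payoff_natCast, ← Nat.cast_finsetSup', Nat.cast_le, Nat.cast_inj]
  split <;> simp

theorem stmt4 : (Finset.range 64).filter (fun n => T 4 n = n)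
    = ({0, 21, 23, 29, 42, 43, 46, 53, 58, 63} : Finset ℕ) := by
  have hT (n : ℕ) : T 4 n = enc (updateNat 4 (dec n)) := by
    simpa [T] using congrArg enc (update_natCast 4 (dec n))
  simp only [hT]
  decide
end

section
/- (Regime C image chain) For every real parameter b with 3 < b < 4: the image of the full state set {0,1,...,63} under the update map t_b equals {0, 5, 10, 17, 20, 23, 29, 34, 40, 43, 46, 53, 58, 63}, and the image of the full state set under t_b ∘ t_b equals {0, 23, 29, 43, 46, 53, 58, 63}. -/
open Finset

section ImitateBest

variable {ι α β : Type*} [LinearOrder α] [LinearOrder β]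

def imitateBest (N : ι → Finset ι) (hN : ∀ i, (N i).Nonempty) (P : ι → α) (σ : ι → Bool)
    (i : ι) : Bool :=
  let m := (N i).sup' (hN i) P
  if m ≤ P i then σ i else decide (∃ j ∈ N i, P j = m ∧ σ j = true)

theorem imitateBest_comp_of_strictMono (N : ι → Finset ι) (hN : ∀ i, (N i).Nonempty)
    {f : α → β} (hf : StrictMono f) (P : ι → α) (σ : ι → Bool) :
    imitateBest N hN (f ∘ P) σ = imitateBest N hN P σ := by
  funext i
  have hsup : (N i).sup' (hN i) (fun j => f (P j)) = f ((N i).sup' (hN i) P) :=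
    (apply_sup'_eq_sup'_comp (hN i) f fun _ _ => hf.monotone.map_max).symm
  simp only [imitateBest, Function.comp_apply, hsup, hf.le_iff_le, hf.injective.eq_iff]

end ImitateBest

theorem update_eq_imitateBest (b : ℝ) (σ : Fin 6 → Bool) :
    update b σ = imitateBest nbrs nbrs_nonempty (payoff b σ) σ := by
  funext i
  simp only [update, imitateBest]
  split_ifs <;> simp_all

theorem sum_pay_eq {ι : Type*} (b : ℝ) (s : Finset ι) (x : Bool) (τ : ι → Bool) :
    ∑ j ∈ s, pay b x (τ j)
      = #{j ∈ s | τ j} * pay b x true + #{j ∈ s | ¬τ j} * pay b x false := by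
  have hpay (t : Bool) : pay b x t = if t then pay b x true else pay b x false := by
    cases t <;> rfl
  rw [sum_congr rfl fun j _ => hpay (τ j), sum_ite, sum_const, sum_const, nsmul_eq_mul,
    nsmul_eq_mul]

theorem card_nbrs (i : Fin 6) : #(nbrs i) = 3 := by
  fin_cases i <;> rfl

def coopCount (σ : Fin 6 → Bool) (i : Fin 6) : Fin 4 :=
  ⟨#{j ∈ nbrs i | σ j}, Nat.lt_succ_of_le (card_nbrs i ▸ card_filter_le _ _)⟩

theorem card_nbrs_filter_not (σ : Fin 6 → Bool) (i : Fin 6) :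
    (#{j ∈ nbrs i | ¬σ j} : ℝ) = 3 - (coopCount σ i : ℕ) := by
  rw [eq_sub_iff_add_eq, ← Nat.cast_add, add_comm, coopCount,
    card_filter_add_card_filter_not, card_nbrs, Nat.cast_ofNat]

/-- A cell with `c` cooperating neighbours earns `3c` if it cooperates and `3 + c(b - 1)` if it
defects; these are the seven distinct values (a cooperator with one cooperating neighbour and a
defector with none both earn `3`). -/
def payoffLevel (b : ℝ) : Fin 7 → ℝ :=
  ![0, 3, 2 + b, 6, 1 + 2 * b, 9, 3 * b]

theorem payoffLevel_strictMono {b : ℝ} (hb₃ : 3 < b) (hb₄ : b < 4) :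
    StrictMono (payoffLevel b) := by
  refine Fin.strictMono_iff_lt_succ.2 fun i => ?_
  fin_cases i <;> simp [payoffLevel] <;> linarith

def levelIndex : Bool → Fin 4 → Fin 7
  | true => ![0, 1, 3, 5]
  | false => ![1, 2, 4, 6]

def payoffRank (σ : Fin 6 → Bool) (i : Fin 6) : Fin 7 :=
  levelIndex (σ i) (coopCount σ i)

theorem payoff_eq_payoffLevel (b : ℝ) (σ : Fin 6 → Bool) (i : Fin 6) :
    payoff b σ i = payoffLevel b (payoffRank σ i) := by
  rw [payoff, sum_pay_eq, card_nbrs_filter_not, payoffRank]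
  change ((coopCount σ i : ℕ) : ℝ) * _ + _ = _
  generalize σ i = x, coopCount σ i = c
  fin_cases c <;> cases x <;> simp [pay, levelIndex, payoffLevel] <;> ring

def rankUpdate (σ : Fin 6 → Bool) : Fin 6 → Bool :=
  imitateBest nbrs nbrs_nonempty (payoffRank σ) σ

theorem update_eq_rankUpdate {b : ℝ} (hb₃ : 3 < b) (hb₄ : b < 4) (σ : Fin 6 → Bool) :
    update b σ = rankUpdate σ := by
  have hpayoff : payoff b σ = payoffLevel b ∘ payoffRank σ :=
    funext (payoff_eq_payoffLevel b σ)
  rw [update_eq_imitateBest, hpayoff, rankUpdate,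
    imitateBest_comp_of_strictMono _ _ (payoffLevel_strictMono hb₃ hb₄)]

theorem stmt8 : ∀ b : ℝ, 3 < b → b < 4 →
    (Finset.range 64).image (T b)
      = ({0, 5, 10, 17, 20, 23, 29, 34, 40, 43, 46, 53, 58, 63} : Finset ℕ) ∧
    (Finset.range 64).image (fun n => T b (T b n))
      = ({0, 23, 29, 43, 46, 53, 58, 63} : Finset ℕ) := by
  intro b hb₃ hb₄
  have hT : T b = fun n => enc (rankUpdate (dec n)) :=
    funext fun n => congrArg enc (update_eq_rankUpdate hb₃ hb₄ (dec n))
  rw [hT]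
  constructor <;> decide
end
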